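/- Let G be a subgroup of the permutation group of Fin n and let f : (Fin n → Bool) → Bool be invariant under every π ∈ G. Then f is satisfiable if and only if there exists an assignment σ with f(σ) = true and σ ≤ σ ∘ π in lexicographic order for every π ∈ G. That is, conjoining the full lex-leader symmetry breaking predicate LL-SBP of G to f preserves satisfiability. -/

import Mathlib

/-
Each orbit of `G` on assignments is finite, so it has a lexicographically least element `τ`.
Every `τ ∘ π` with `π ∈ G` lies in the same orbit, hence `τ ≤ τ ∘ π`; and by invariance
`f τ = f σ` for any `σ` in the orbit.
-/

/-- Lexicographic order on assignments `Fin n → Bool` (earlier indices more significant,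
with `false < true`). -/
def lexLe {n : ℕ} (σ τ : Fin n → Bool) : Prop :=
  σ = τ ∨ ∃ i : Fin n, (∀ j, j < i → σ j = τ j) ∧ σ i = false ∧ τ i = true

open Equiv

lemma lexLe_iff_toLex_le {n : ℕ} (σ τ : Fin n → Bool) : lexLe σ τ ↔ toLex σ ≤ toLex τ := by
  rw [le_iff_eq_or_lt, lexLe, toLex_inj]
  refine or_congr_right ⟨fun ⟨i, hlt, hσ, hτ⟩ => ⟨i, hlt, by simp [hσ, hτ]⟩, ?_⟩
  rintro ⟨i, hlt, hi⟩
  exact ⟨i, hlt, Bool.lt_iff.1 hi⟩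

theorem Subgroup.exists_forall_toLex_comp_le {ι β : Type*} [LinearOrder ι] [WellFoundedLT ι]
    [LinearOrder β] (G : Subgroup (Perm ι)) [Finite G] (σ : ι → β) :
    ∃ π₀ ∈ G, ∀ π ∈ G, toLex (σ ∘ π₀) ≤ toLex (σ ∘ π₀ ∘ π) := by
  obtain ⟨π₀, hπ₀, hmin⟩ := Set.exists_min_image (G : Set (Perm ι)) (fun π => toLex (σ ∘ π))
    (Set.toFinite _) ⟨1, G.one_mem⟩
  exact ⟨π₀, hπ₀, fun π hπ => hmin (π₀ * π) (G.mul_mem hπ₀ hπ)⟩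

/-- If `f` is invariant under every permutation of a subgroup `G` of `Perm (Fin n)`,
then `f` is satisfiable iff some assignment satisfies `f` together with the full
lex-leader symmetry breaking predicate `LL-SBP` of `G`. -/
theorem stmt_5 {n : ℕ} (G : Subgroup (Equiv.Perm (Fin n)))
    (f : (Fin n → Bool) → Bool)
    (hinv : ∀ π ∈ G, ∀ σ : Fin n → Bool, f (σ ∘ π) = f σ) :
    (∃ σ : Fin n → Bool, f σ = true) ↔
      (∃ σ : Fin n → Bool, f σ = true ∧ ∀ π ∈ G, lexLe σ (σ ∘ π)) := by
  refine ⟨fun ⟨σ, hσ⟩ => ?_, fun ⟨σ, hσ, _⟩ => ⟨σ, hσ⟩⟩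
  obtain ⟨π₀, hπ₀, hleader⟩ := G.exists_forall_toLex_comp_le σ
  refine ⟨σ ∘ π₀, by rw [hinv π₀ hπ₀, hσ], fun π hπ => ?_⟩
  rw [lexLe_iff_toLex_le]
  exact hleader π hπ
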